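/- Fix constants 0 < α < b, J₁, 𝔪 ∈ N and δ₃ ∈ (0,1), and set J₂ := J₁ + ⌈δ₃^{−2}⌉. There exists c > 0 depending only on α and b such that for all sufficiently large n (depending on J₁, 𝔪, δ₃), for every function PT as in the hypotheses, every z ∈ Box(n) and every unit direction θ, the following holds. Define U_j := Σ_{i=0}^{2^{j𝔪}−1} PT(z + i·(n/2^{j𝔪})·θ, z + (i+1)·(n/2^{j𝔪})·θ) for J₁ ≤ j ≤ J₂. Then (U_j) is nondecreasing in j, and there exists a set I of at least c/δ₃ consecutive integers contained in [J₁, J₂] such that 0 ≤ U_{j+1}/U_j − 1 ≤ δ₃ for every j with j, j+1 ∈ I. -/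

import Mathlib

noncomputable section

/-- Euclidean norm on `ℝ²`. -/
def norm2 (p : ℝ × ℝ) : ℝ := Real.sqrt (p.1 ^ 2 + p.2 ^ 2)

/-- The box `[-r, r]² ⊆ ℝ²`. -/
def Box (r : ℝ) : Set (ℝ × ℝ) := {p | |p.1| ≤ r ∧ |p.2| ≤ r}

/-- The lattice box `[-r, r]² ∩ ℤ²`. -/
def LBox (r : ℝ) : Set (ℤ × ℤ) := {z | |(z.1 : ℝ)| ≤ r ∧ |(z.2 : ℝ)| ≤ r}

/-- The unit vector at angle `a`. -/
def dir (a : ℝ) : ℝ × ℝ := (Real.cos a, Real.sin a)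

/-- `z` is `(δ, θ, ℓ, k)`-stable for the distance function `D`: for every integer
`1 ≤ k' ≤ k`, `k'·D(z, z+ℓθ)/(1+δ) ≤ D(z, z+k'ℓθ) ≤ (1+δ)·k'·D(z, z+ℓθ)`. -/
def StablePt (D : ℝ × ℝ → ℝ × ℝ → ℝ) (δ : ℝ) (θ : ℝ × ℝ) (ℓ : ℝ) (k : ℝ)
    (z : ℝ × ℝ) : Prop :=
  ∀ k' : ℕ, 1 ≤ k' → (k' : ℝ) ≤ k →
    (k' : ℝ) * D z (z + ℓ • θ) / (1 + δ) ≤ D z (z + ((k' : ℝ) * ℓ) • θ) ∧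
      D z (z + ((k' : ℝ) * ℓ) • θ) ≤ (1 + δ) * (k' : ℝ) * D z (z + ℓ • θ)

/-- `z` is `(δ, S¹(η), ℓ, k)`-stable: it is `(δ, θ, ℓ, k)`-stable for every direction
`θ` in the discretized circle `S¹(η) = {0, η, 2η, …, 2π − η}`. -/
def StableDirs (D : ℝ × ℝ → ℝ × ℝ → ℝ) (δ η ℓ k : ℝ) (z : ℝ × ℝ) : Prop :=
  ∀ i : ℕ, (i : ℝ) * η ≤ 2 * Real.pi - η → StablePt D δ (dir ((i : ℝ) * η)) ℓ k z

/-- The gradient function `grad(z, θ, ℓ) = D(z, z + ℓθ)/ℓ`. -/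
def grad (D : ℝ × ℝ → ℝ × ℝ → ℝ) (z : ℝ × ℝ) (θ : ℝ × ℝ) (ℓ : ℝ) : ℝ :=
  D z (z + ℓ • θ) / ℓ

/-- `D : ℝ² × ℝ² → [0,∞)` satisfies the triangle inequality and the two-sided bound
`α|x−y| ≤ D(x,y) ≤ 3b|x−y|` for all `x, y ∈ Box(R)` with `|x−y| ≥ rt`. -/
def GoodPT' (α b R rt : ℝ) (D : ℝ × ℝ → ℝ × ℝ → ℝ) : Prop :=
  (∀ x y, 0 ≤ D x y) ∧
  (∀ x y z, D x z ≤ D x y + D y z) ∧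
  (∀ x y, x ∈ Box R → y ∈ Box R → rt ≤ norm2 (x - y) →
    α * norm2 (x - y) ≤ D x y ∧ D x y ≤ 3 * b * norm2 (x - y))

/-- `U_j := Σ_{i=0}^{2^{j𝔪}−1} D(z + i·(n/2^{j𝔪})·θ, z + (i+1)·(n/2^{j𝔪})·θ)`. -/
def Usum (D : ℝ × ℝ → ℝ × ℝ → ℝ) (z θ : ℝ × ℝ) (n 𝔪 j : ℕ) : ℝ :=
  ∑ i ∈ Finset.range (2 ^ (j * 𝔪)),
    D (z + ((i : ℝ) * ((n : ℝ) / 2 ^ (j * 𝔪))) • θ)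
      (z + (((i : ℝ) + 1) * ((n : ℝ) / 2 ^ (j * 𝔪))) • θ)

/-!
Refining the partition of the segment only adds triangle-inequality slack, so `U_j` is
nondecreasing in `j`, and while the mesh `n / 2^{j𝔪}` stays above `√n` every `U_j` lies in
`[α n, 3 b n]`. Call a scale steep if `U_{j+1} > (1 + δ) U_j`: each steep scale multiplies `U` by
`1 + δ`, so the number `B` of steep scales satisfies `(1 + B δ) α ≤ 3 b`. The steep scales cut the
`⌈δ⁻²⌉` scales into at most `B + 1` runs of flat ones, and by pigeonhole the longest run has
about `δ⁻² / (B + 1) ≥ α / (3 b δ)` scales.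
-/

open Finset

section Triangle

variable {X : Type*} {D : X → X → ℝ}

theorem le_sum_range_of_triangle (hD : ∀ x y z, D x z ≤ D x y + D y z) (p : ℕ → X)
    {K : ℕ} (hK : 1 ≤ K) : D (p 0) (p K) ≤ ∑ i ∈ range K, D (p i) (p (i + 1)) := by
  induction K, hK using Nat.le_induction with
  | base => simp
  | succ K _ ih =>
    rw [sum_range_succ]
    exact (hD _ (p K) _).trans (add_le_add_left ih _)

theorem sum_range_le_sum_range_mul (hD : ∀ x y z, D x z ≤ D x y + D y z) (p : ℕ → X)
    {k : ℕ} (hk : 1 ≤ k) (P : ℕ) :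
    ∑ q ∈ range P, D (p (q * k)) (p ((q + 1) * k)) ≤
      ∑ i ∈ range (P * k), D (p i) (p (i + 1)) := by
  induction P with
  | zero => simp
  | succ P ih =>
    rw [sum_range_succ, add_one_mul, sum_range_add]
    refine add_le_add ih ?_
    simpa only [add_assoc, add_zero] using le_sum_range_of_triangle hD (fun i => p (P * k + i)) hk

end Triangle

theorem Usum_eq_sum_range (D : ℝ × ℝ → ℝ × ℝ → ℝ) (z θ : ℝ × ℝ) (n 𝔪 j : ℕ) :
    Usum D z θ n 𝔪 j = ∑ i ∈ range (2 ^ (j * 𝔪)),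
      D (z + ((i : ℝ) * (n / 2 ^ (j * 𝔪))) • θ)
        (z + (((i + 1 : ℕ) : ℝ) * (n / 2 ^ (j * 𝔪))) • θ) := by
  simp only [Usum, Nat.cast_succ]

theorem Usum_le_Usum_succ {D : ℝ × ℝ → ℝ × ℝ → ℝ} (hD : ∀ x y z, D x z ≤ D x y + D y z)
    (z θ : ℝ × ℝ) (n 𝔪 j : ℕ) : Usum D z θ n 𝔪 j ≤ Usum D z θ n 𝔪 (j + 1) := by
  have hpow : (2 : ℕ) ^ ((j + 1) * 𝔪) = 2 ^ (j * 𝔪) * 2 ^ 𝔪 := by rw [add_one_mul, pow_add]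
  have hpt : ∀ q : ℕ,
      ((q * 2 ^ 𝔪 : ℕ) : ℝ) * (n / 2 ^ ((j + 1) * 𝔪)) = q * (n / 2 ^ (j * 𝔪)) := by
    intro q
    rw [add_one_mul, pow_add]
    push_cast
    field_simp
  rw [Usum_eq_sum_range, Usum_eq_sum_range, hpow]
  convert sum_range_le_sum_range_mul hD
    (fun i : ℕ => z + ((i : ℝ) * (n / 2 ^ ((j + 1) * 𝔪))) • θ) Nat.one_le_two_pow _
    using 3 <;> rw [hpt]

theorem norm2_smul (c : ℝ) (θ : ℝ × ℝ) : norm2 (c • θ) = |c| * norm2 θ := by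
  simp only [norm2, Prod.smul_fst, Prod.smul_snd, smul_eq_mul]
  rw [mul_pow, mul_pow, ← mul_add, Real.sqrt_mul (sq_nonneg c), Real.sqrt_sq_eq_abs]

theorem abs_fst_le_and_abs_snd_le_of_norm2_eq_one {θ : ℝ × ℝ} (hθ : norm2 θ = 1) :
    |θ.1| ≤ 1 ∧ |θ.2| ≤ 1 := by
  have h : θ.1 ^ 2 + θ.2 ^ 2 = 1 := Real.sqrt_eq_one.mp hθ
  constructor <;> rw [abs_le] <;> constructor <;> nlinarith [sq_nonneg θ.1, sq_nonneg θ.2]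

theorem add_smul_mem_Box {r t : ℝ} {z θ : ℝ × ℝ} (hz : z ∈ Box r) (hθ : norm2 θ = 1)
    (ht : |t| ≤ r) : z + t • θ ∈ Box (2 * r) := by
  obtain ⟨hθ1, hθ2⟩ := abs_fst_le_and_abs_snd_le_of_norm2_eq_one hθ
  have key : ∀ a b : ℝ, |a| ≤ r → |b| ≤ 1 → |a + t * b| ≤ 2 * r := fun a b ha hb =>
    calc |a + t * b| ≤ |a| + |t| * |b| := (abs_add_le _ _).trans_eq (by rw [abs_mul])
      _ ≤ r + r * 1 := by gcongr; exact (abs_nonneg _).trans ht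
      _ = 2 * r := by ring
  exact ⟨key _ _ hz.1 hθ1, key _ _ hz.2 hθ2⟩

theorem Box_mono {r s : ℝ} (h : r ≤ s) : Box r ⊆ Box s :=
  fun _ hp => ⟨hp.1.trans h, hp.2.trans h⟩

theorem GoodPT'.bounds_add_smul {α b R ρ r s t : ℝ} {D : ℝ × ℝ → ℝ × ℝ → ℝ}
    (hD : GoodPT' α b R ρ D) (hR : 2 * r ≤ R) {z θ : ℝ × ℝ} (hz : z ∈ Box r)
    (hθ : norm2 θ = 1) (hs : |s| ≤ r) (ht : |t| ≤ r) (hρ : ρ ≤ |s - t|) :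
    α * |s - t| ≤ D (z + s • θ) (z + t • θ) ∧ D (z + s • θ) (z + t • θ) ≤ 3 * b * |s - t| := by
  have hdist : norm2 ((z + s • θ) - (z + t • θ)) = |s - t| := by
    rw [add_sub_add_left_eq_sub, ← sub_smul, norm2_smul, hθ, mul_one]
  rw [← hdist] at hρ ⊢
  exact hD.2.2 _ _ (Box_mono hR (add_smul_mem_Box hz hθ hs))
    (Box_mono hR (add_smul_mem_Box hz hθ ht)) hρ

theorem Usum_bounds {α b : ℝ} {n 𝔪 j : ℕ} {D : ℝ × ℝ → ℝ × ℝ → ℝ}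
    (hD : GoodPT' α b (10 * n) (√n) D) {z θ : ℝ × ℝ} (hz : z ∈ Box n) (hθ : norm2 θ = 1)
    (hscale : √n ≤ n / 2 ^ (j * 𝔪)) :
    α * n ≤ Usum D z θ n 𝔪 j ∧ Usum D z θ n 𝔪 j ≤ 3 * b * n := by
  set ℓ : ℝ := n / 2 ^ (j * 𝔪)
  have hℓ : 0 ≤ ℓ := by positivity
  have htotal : ((2 ^ (j * 𝔪) : ℕ) : ℝ) * ℓ = n := by
    push_cast; exact mul_div_cancel₀ _ (by positivity)
  have hterm : ∀ i ∈ range (2 ^ (j * 𝔪)),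
      α * ℓ ≤ D (z + ((i : ℝ) * ℓ) • θ) (z + (((i : ℝ) + 1) * ℓ) • θ) ∧
        D (z + ((i : ℝ) * ℓ) • θ) (z + (((i : ℝ) + 1) * ℓ) • θ) ≤ 3 * b * ℓ := by
    intro i hi
    have hi' : ((i : ℝ) + 1) * ℓ ≤ n := by
      rw [← htotal]
      gcongr
      exact_mod_cast mem_range.mp hi
    have hgap : |(i : ℝ) * ℓ - ((i : ℝ) + 1) * ℓ| = ℓ := by
      rw [show (i : ℝ) * ℓ - ((i : ℝ) + 1) * ℓ = -ℓ by ring, abs_neg, abs_of_nonneg hℓ]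
    have hbox : ∀ t : ℝ, 0 ≤ t → t ≤ ((i : ℝ) + 1) * ℓ → |t| ≤ n := fun t h0 h1 =>
      (abs_of_nonneg h0).trans_le (h1.trans hi')
    have := hD.bounds_add_smul (by linarith [(Nat.cast_nonneg n : (0 : ℝ) ≤ n)]) hz hθ
      (hbox _ (by positivity) (by gcongr; linarith)) (hbox _ (by positivity) le_rfl)
      (hgap.symm ▸ hscale)
    rwa [hgap] at this
  have hsum : ∀ c : ℝ, ∑ _i ∈ range (2 ^ (j * 𝔪)), c * ℓ = c * n := fun c => by
    rw [sum_const, card_range, nsmul_eq_mul, ← htotal]; ring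
  constructor
  · rw [← hsum]; exact sum_le_sum fun i hi => (hterm i hi).1
  · rw [← hsum]; exact sum_le_sum fun i hi => (hterm i hi).2

theorem sqrt_le_div_two_pow {x : ℝ} {k : ℕ} (h : 4 ^ k ≤ x) : √x ≤ x / 2 ^ k := by
  have hx : 0 ≤ x := (by positivity : (0 : ℝ) ≤ 4 ^ k).trans h
  have h2 : (2 : ℝ) ^ k ≤ √x :=
    Real.le_sqrt_of_sq_le (by rw [← pow_mul, mul_comm, pow_mul]; norm_num [h])
  rw [le_div_iff₀ (by positivity)]
  calc √x * 2 ^ k ≤ √x * √x := by gcongr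
    _ = x := Real.mul_self_sqrt hx

theorem exists_run_of_monotone {g : ℕ → ℕ} (hg : Monotone g) (M : ℕ) :
    ∃ a len, a + len ≤ M ∧ g (a + len) = g a ∧ M + 1 ≤ (len + 1) * (g M + 1) := by
  have hmaps : ∀ i ∈ range (M + 1), g i ∈ range (g M + 1) := fun i hi =>
    mem_range.2 (Nat.lt_succ_of_le (hg (Nat.le_of_lt_succ (mem_range.1 hi))))
  obtain ⟨y, -, hy⟩ := exists_le_card_fiber_of_nsmul_le_card_of_maps_to hmaps
    nonempty_range_add_one (b := ((M + 1 : ℕ) : ℝ) / (g M + 1 : ℕ))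
    (by rw [card_range, card_range, nsmul_eq_mul, mul_div_cancel₀ _ (by positivity)])
  set F := {i ∈ range (M + 1) | g i = y}
  have hF : F.Nonempty := card_pos.1 (by exact_mod_cast (by positivity : (0 : ℝ) < _).trans_le hy)
  have hmin := mem_filter.1 (F.min'_mem hF)
  have hmax := mem_filter.1 (F.max'_mem hF)
  have hle : F.min' hF ≤ F.max' hF := F.min'_le _ (F.max'_mem hF)
  refine ⟨F.min' hF, F.max' hF - F.min' hF, ?_, ?_, ?_⟩
  · have := mem_range.1 hmax.1; omega
  · rw [Nat.add_sub_cancel' hle, hmax.2, hmin.2]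
  · have hcard : #F ≤ F.max' hF - F.min' hF + 1 := by
      calc #F ≤ #(Icc (F.min' hF) (F.max' hF)) :=
            card_le_card fun i hi => mem_Icc.2 ⟨F.min'_le i hi, F.le_max' i hi⟩
        _ = _ := by rw [Nat.card_Icc]; omega
    rw [div_le_iff₀ (by positivity), ← Nat.cast_mul] at hy
    exact (Nat.cast_le.1 hy).trans (Nat.mul_le_mul_right _ hcard)

section FlatRun

variable {U : ℕ → ℝ} {δ : ℝ}

theorem one_add_pow_count_mul_le (hU : Monotone U) (hδ : 0 ≤ δ) (t : ℕ) :
    (1 + δ) ^ Nat.count (fun j => (1 + δ) * U j < U (j + 1)) t * U 0 ≤ U t := by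
  induction t with
  | zero => simp
  | succ t ih =>
    rw [Nat.count_succ]
    split_ifs with hsteep
    · calc (1 + δ) ^ (Nat.count _ t + 1) * U 0 = (1 + δ) * ((1 + δ) ^ Nat.count _ t * U 0) := by
            ring
        _ ≤ (1 + δ) * U t := by gcongr
        _ ≤ U (t + 1) := hsteep.le
    · simpa using ih.trans (hU t.le_succ)

theorem exists_flat_run (hU : Monotone U) (hδ0 : 0 ≤ δ) (hδ1 : δ ≤ 1) {A C : ℝ} (hA : 0 ≤ A)
    (hU0 : A ≤ U 0) {M : ℕ} (hUM : U M ≤ C) :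
    ∃ a len, a + len ≤ M ∧ (∀ j, a ≤ j → j < a + len → U (j + 1) ≤ (1 + δ) * U j) ∧
      (M + 1) * δ * A ≤ (len + 1) * C := by
  set steep : ℕ → Prop := fun j => (1 + δ) * U j < U (j + 1)
  obtain ⟨a, len, hM, hconst, hlen⟩ := exists_run_of_monotone (Nat.count_monotone steep) M
  refine ⟨a, len, hM, fun j haj hja => not_lt.1 fun hj => ?_, ?_⟩
  · have := (Nat.count_lt_count_succ_iff (p := steep)).2 hj
    have := Nat.count_monotone steep haj
    have := Nat.count_monotone steep (show j + 1 ≤ a + len by omega)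
    omega
  · set B := Nat.count steep M
    have hB : (B + 1) * δ * A ≤ C :=
      calc (B + 1) * δ * A ≤ (1 + B * δ) * A := by nlinarith
        _ ≤ (1 + δ) ^ B * U 0 := by gcongr; exact one_add_mul_le_pow (by linarith) B
        _ ≤ C := (one_add_pow_count_mul_le hU hδ0 M).trans hUM
    have hlen' : (M + 1 : ℝ) ≤ (len + 1) * (B + 1) := by exact_mod_cast hlen
    calc (M + 1) * δ * A ≤ (len + 1) * (B + 1) * (δ * A) := by
          rw [mul_assoc]; gcongr
      _ = (len + 1) * ((B + 1) * δ * A) := by ring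
      _ ≤ (len + 1) * C := by gcongr

theorem div_sub_one_nonneg_and_le {x y δ : ℝ} (hx : 0 < x) (hxy : x ≤ y)
    (hy : y ≤ (1 + δ) * x) :
    0 ≤ y / x - 1 ∧ y / x - 1 ≤ δ := by
  rw [sub_nonneg, one_le_div hx, sub_le_iff_le_add, div_le_iff₀ hx, add_comm]
  exact ⟨hxy, hy⟩

/-- consecutive flat scales. With `J₂ := J₁ + ⌈δ₃^{−2}⌉`, there is
`c = c(α,b) > 0` such that for all large `n`, every admissible `D`, every `z ∈ Box(n)`
and unit `θ`: `(U_j)` is nondecreasing on `[J₁, J₂]`, and there is a set `I` of at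
least `c/δ₃` consecutive integers contained in `[J₁, J₂]` with
`0 ≤ U_{j+1}/U_j − 1 ≤ δ₃` for every `j` with `j, j+1 ∈ I`. -/
theorem consecutive_flat_scales
    (α b : ℝ) (hα : 0 < α) (hab : α < b) :
    ∃ c : ℝ, 0 < c ∧
    ∀ (J₁ 𝔪 : ℕ) (δ₃ : ℝ), 1 ≤ 𝔪 → 0 < δ₃ → δ₃ < 1 →
    ∃ N : ℕ, ∀ n : ℕ, N ≤ n →
    ∀ D : ℝ × ℝ → ℝ × ℝ → ℝ, GoodPT' α b (10 * n) (Real.sqrt n) D →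
    ∀ z ∈ Box (n : ℝ), ∀ θ : ℝ × ℝ, norm2 θ = 1 →
      (∀ j : ℕ, J₁ ≤ j → j < J₁ + ⌈1 / δ₃ ^ 2⌉₊ →
        Usum D z θ n 𝔪 j ≤ Usum D z θ n 𝔪 (j + 1)) ∧
      (∃ a len : ℕ, J₁ ≤ a ∧ a + len ≤ J₁ + ⌈1 / δ₃ ^ 2⌉₊ ∧
        c / δ₃ ≤ (len : ℝ) + 1 ∧
        ∀ j : ℕ, a ≤ j → j + 1 ≤ a + len →
          0 ≤ Usum D z θ n 𝔪 (j + 1) / Usum D z θ n 𝔪 j - 1 ∧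
            Usum D z θ n 𝔪 (j + 1) / Usum D z θ n 𝔪 j - 1 ≤ δ₃) := by
  have hb : 0 < b := hα.trans hab
  refine ⟨α / (3 * b), by positivity, fun J₁ 𝔪 δ₃ _ hδ0 hδ1 => ?_⟩
  set M := ⌈1 / δ₃ ^ 2⌉₊
  refine ⟨4 ^ ((J₁ + M) * 𝔪), fun n hN D hD z hz θ hθ => ?_⟩
  set U := Usum D z θ n 𝔪
  have hn : (0 : ℝ) < n := by exact_mod_cast (Nat.one_le_pow _ _ (by norm_num)).trans hN
  have hmono : Monotone U := monotone_nat_of_le_succ (Usum_le_Usum_succ hD.2.1 z θ n 𝔪)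
  have hbounds : ∀ j ≤ J₁ + M, α * n ≤ U j ∧ U j ≤ 3 * b * n := fun j hj =>
    Usum_bounds hD hz hθ <| sqrt_le_div_two_pow <|
      (pow_le_pow_right₀ (by norm_num) (Nat.mul_le_mul_right 𝔪 hj)).trans (by exact_mod_cast hN)
  obtain ⟨a, len, hM, hflat, hlen⟩ := exists_flat_run (U := fun i => U (J₁ + i))
    (fun i j h => hmono (by omega)) hδ0.le hδ1.le (by positivity) (hbounds J₁ (by omega)).1
    (hbounds (J₁ + M) le_rfl).2
  refine ⟨fun j _ _ => hmono j.le_succ, J₁ + a, len, by omega, by omega, ?_, fun j hj hj' => ?_⟩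
  · have hM : 1 ≤ M * δ₃ ^ 2 := (div_le_iff₀ (by positivity)).1 (Nat.le_ceil (1 / δ₃ ^ 2))
    have hlen' : (M + 1) * δ₃ * α ≤ (len + 1) * (3 * b) :=
      le_of_mul_le_mul_right (by linarith [hlen]) hn
    rw [div_div, div_le_iff₀ (by positivity)]
    calc α ≤ M * δ₃ ^ 2 * α := le_mul_of_one_le_left hα.le hM
      _ ≤ δ₃ * ((M + 1) * δ₃ * α) := by nlinarith [mul_pos (pow_pos hδ0 2) hα]
      _ ≤ δ₃ * ((len + 1) * (3 * b)) := by gcongr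
      _ = (len + 1) * (3 * b * δ₃) := by ring
  · obtain ⟨i, rfl⟩ := Nat.exists_eq_add_of_le (show J₁ ≤ j by omega)
    exact div_sub_one_nonneg_and_le ((mul_pos hα hn).trans_le (hbounds _ (by omega)).1)
      (hmono (J₁ + i).le_succ) (hflat i (by omega) (by omega))
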